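/- Let n ≥ 3 and let r be an integer with ⌊n/2⌋ < r ≤ n − 1. Then the curling number of the r-th power of the path graph P_n equals 2(r + 1) − n. -/

import Mathlib

open Finset

/-- The degree of a vertex `v` in a simple graph `G`: the number of its neighbours. -/
noncomputable def gdeg {V : Type*} (G : SimpleGraph V) (v : V) : ℕ :=
  (G.neighborSet v).ncard

/-- The curling number of a finite simple graph: the maximum number of vertices
of `G` sharing a common degree. -/
noncomputable def curlingNumber {V : Type*} [Fintype V] (G : SimpleGraph V) : ℕ :=
  Finset.univ.sup fun v => (Finset.univ.filter fun u => gdeg G u = gdeg G v).card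

/-- The `r`-th power of a simple graph `G`: same vertex set, two distinct vertices
adjacent iff their distance in `G` is (finite and) at most `r`. -/
def SimpleGraph.power {V : Type*} (G : SimpleGraph V) (r : ℕ) : SimpleGraph V where
  Adj u v := u ≠ v ∧ G.Reachable u v ∧ G.dist u v ≤ r
  symm := by
    constructor
    rintro u v ⟨h1, h2, h3⟩
    exact ⟨h1.symm, h2.symm, by rwa [SimpleGraph.dist_comm]⟩
  loopless := by
    constructor
    rintro v ⟨h1, -, -⟩
    exact h1 rfl
/-!
In `P_n^r` the vertex `i` is adjacent exactly to the other vertices of the window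
`[i - r, i + r] ∩ [0, n - 1]`, so its degree is `min (i + r) (n - 1) - (i - r)` (truncated
subtraction). When `n ≤ 2r + 1` the vertices `n - 1 - r, …, r` see every other vertex, and
outside this core the degree is strictly monotone on each side of it, so the only other
coincidences of degrees are the mirror pairs `i, n - 1 - i`. Hence every degree class is the
core, of size `2(r + 1) - n`, or has at most two elements, and `2 ≤ 2(r + 1) - n` as `n < 2r`.
-/

open SimpleGraph

section DegreeClass

variable {V : Type*} [Fintype V] (G : SimpleGraph V)

noncomputable def degreeClass (v : V) : Finset V := {u | gdeg G u = gdeg G v}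

lemma card_degreeClass_le_curlingNumber (v : V) : #(degreeClass G v) ≤ curlingNumber G :=
  le_sup (f := fun v => #(degreeClass G v)) (mem_univ v)

lemma curlingNumber_le {m : ℕ} (h : ∀ v, #(degreeClass G v) ≤ m) : curlingNumber G ≤ m :=
  Finset.sup_le fun v _ => h v

end DegreeClass

lemma gdeg_eq_degree {V : Type*} (G : SimpleGraph V) (v : V) [Fintype (G.neighborSet v)] :
    gdeg G v = G.degree v := by
  rw [gdeg, ← Nat.card_coe_set_eq, Nat.card_eq_fintype_card, card_neighborSet_eq_degree]

namespace SimpleGraph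

variable {n : ℕ}

lemma pathGraph_exists_walk_length_eq (i : Fin n) :
    ∀ (k : ℕ) (j : Fin n), (j : ℕ) = i + k → ∃ w : (pathGraph n).Walk i j, w.length = k := by
  intro k
  induction k generalizing i with
  | zero =>
    intro j hj
    obtain rfl : i = j := Fin.ext (by omega)
    exact ⟨.nil, rfl⟩
  | succ k ih =>
    intro j hj
    let i' : Fin n := ⟨i + 1, by omega⟩
    have hadj : (pathGraph n).Adj i i' := pathGraph_adj.mpr (.inl rfl)
    obtain ⟨w, hw⟩ := ih i' j (by simp [i']; omega)
    exact ⟨.cons hadj w, by simp [hw]⟩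

lemma pathGraph_walk_length_ge {i j : Fin n} (w : (pathGraph n).Walk i j) :
    (i : ℕ) - j + (j - i) ≤ w.length := by
  induction w with
  | nil => simp
  | cons h w ih =>
    rw [pathGraph_adj] at h
    rw [Walk.length_cons]
    omega

lemma pathGraph_dist (i j : Fin n) : (pathGraph n).dist i j = (i : ℕ) - j + (j - i) := by
  refine le_antisymm ?_ ?_
  · rcases le_total (i : ℕ) j with h | h
    · obtain ⟨w, hw⟩ := pathGraph_exists_walk_length_eq i (j - i) j (by omega)
      exact (dist_le w).trans (by omega)
    · obtain ⟨w, hw⟩ := pathGraph_exists_walk_length_eq j (i - j) i (by omega)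
      rw [dist_comm]
      exact (dist_le w).trans (by omega)
  · obtain ⟨w, hw⟩ := (pathGraph_preconnected n i j).exists_walk_length_eq_dist
    exact hw ▸ pathGraph_walk_length_ge w

lemma pathGraph_power_adj {r : ℕ} {u v : Fin n} :
    ((pathGraph n).power r).Adj u v ↔ u ≠ v ∧ (u : ℕ) ≤ v + r ∧ (v : ℕ) ≤ u + r := by
  change u ≠ v ∧ _ ∧ _ ↔ _
  rw [pathGraph_dist]
  simp only [pathGraph_preconnected n u v, true_and]
  exact and_congr_right fun _ => by omega

lemma gdeg_pathGraph_power (r : ℕ) (v : Fin n) :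
    gdeg ((pathGraph n).power r) v = min (v + r) (n - 1) - (v - r) := by
  classical
  have hv := v.isLt
  have hmap : (((pathGraph n).power r).neighborFinset v).map Fin.valEmbedding
      = (Icc (v - r) (min (v + r) (n - 1))).erase v := by
    ext a
    simp only [mem_map, mem_neighborFinset, pathGraph_power_adj, Fin.valEmbedding_apply,
      mem_erase, mem_Icc, Fin.exists_iff]
    constructor
    · rintro ⟨a, ha, ⟨hne, h1, h2⟩, rfl⟩
      have : (v : ℕ) ≠ a := fun h => hne (Fin.ext h)
      omega
    · rintro ⟨hne, h1, h2⟩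
      exact ⟨a, by omega, ⟨fun h => hne (congrArg Fin.val h).symm, by omega⟩, rfl⟩
  rw [gdeg_eq_degree, ← card_neighborFinset_eq_degree, ← card_map, hmap,
    card_erase_of_mem (by simp only [mem_Icc]; omega), Nat.card_Icc]
  omega

lemma min_add_sub_sub_eq_iff {n r i j : ℕ} (hn : n ≤ 2 * r + 1) (hi : i < n) (hj : j < n) :
    min (i + r) (n - 1) - (i - r) = min (j + r) (n - 1) - (j - r) ↔
      i = j ∨ i + j = n - 1 ∨ (n - 1 - r ≤ i ∧ i ≤ r ∧ n - 1 - r ≤ j ∧ j ≤ r) := by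
  omega

/-- The vertices within distance `r` of both ends of the path, i.e. the vertices of `P_n^r` adjacent
to all others. -/
def pathPowerCore (n r : ℕ) : Finset (Fin n) := {u | n - 1 - r ≤ u ∧ (u : ℕ) ≤ r}

lemma degreeClass_pathGraph_power {r : ℕ} (hn : n ≤ 2 * r + 1) (v : Fin n) :
    degreeClass ((pathGraph n).power r) v =
      if v ∈ pathPowerCore n r then pathPowerCore n r else {v, v.rev} := by
  ext u
  simp only [degreeClass, gdeg_pathGraph_power, mem_filter, mem_univ, true_and,
    min_add_sub_sub_eq_iff hn u.isLt v.isLt]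
  split_ifs with hv <;>
    simp only [pathPowerCore, mem_filter, mem_univ, true_and, mem_insert, mem_singleton,
      Fin.ext_iff, Fin.val_rev] at hv ⊢ <;>
    omega

lemma card_pathPowerCore {r : ℕ} (hr : r < n) : #(pathPowerCore n r) = 2 * (r + 1) - n := by
  rw [← card_map Fin.valEmbedding]
  have : (pathPowerCore n r).map Fin.valEmbedding = Icc (n - 1 - r) r := by
    ext a
    simp only [pathPowerCore, mem_map, mem_filter, mem_univ, true_and, Fin.valEmbedding_apply,
      mem_Icc, Fin.exists_iff]
    constructor
    · rintro ⟨a, -, h, rfl⟩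
      exact h
    · intro h
      exact ⟨a, by omega, h, rfl⟩
  rw [this, Nat.card_Icc]
  omega

end SimpleGraph

theorem curlingNumber_pathGraph_power_of_gt_general (n r : ℕ)
    (hr1 : n / 2 < r) (hr2 : r ≤ n - 1) :
    curlingNumber ((SimpleGraph.pathGraph n).power r) = 2 * (r + 1) - n := by
  have hrn : r < n := by omega
  have hn : n ≤ 2 * r + 1 := by omega
  have hcore : (⟨r, hrn⟩ : Fin n) ∈ pathPowerCore n r := by
    simp only [pathPowerCore, mem_filter, mem_univ, true_and]
    omega
  apply le_antisymm
  · refine curlingNumber_le _ fun v => ?_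
    rw [degreeClass_pathGraph_power hn v]
    split_ifs
    · rw [card_pathPowerCore hrn]
    · exact card_le_two.trans (by omega)
  · calc 2 * (r + 1) - n = #(degreeClass ((pathGraph n).power r) ⟨r, hrn⟩) := by
          rw [degreeClass_pathGraph_power hn, if_pos hcore, card_pathPowerCore hrn]
      _ ≤ _ := card_degreeClass_le_curlingNumber _ _

/-- For `n ≥ 3` and `⌊n/2⌋ < r ≤ n - 1`, the curling number of the `r`-th
power of the path graph `P_n` is `2(r + 1) - n`. -/
theorem curlingNumber_pathGraph_power_of_gt (n r : ℕ) (hn : 3 ≤ n)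
    (hr1 : n / 2 < r) (hr2 : r ≤ n - 1) :
    curlingNumber ((SimpleGraph.pathGraph n).power r) = 2 * (r + 1) - n :=
  curlingNumber_pathGraph_power_of_gt_general n r hr1 hr2
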